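/- Let ρ and σ be density matrices on ℂ^d with Nussbaum–Szkoła distributions P and Q satisfying supp P ⊆ supp Q. For a sample ω = (ω₁,…,ωₙ) let L_n(ω) = Σ_{k=1}^n log(P(ω_k)/Q(ω_k)) denote the log-likelihood ratio under the product distribution P^{⊗n}. Then for every n ≥ 1, every s with 0 < s < 1, every real R, and every ε with 0 ≤ ε ≤ 1 − s such that P^{⊗n}(L_n ≤ R) > ε/(1−s), one has D_h^ε(ρ^{⊗n} ‖ σ^{⊗n}) ≤ R − log( P^{⊗n}(L_n ≤ R) − ε/(1−s) ) − log s. -/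

import Mathlib

/-!
Write `ρ = ∑ λᵢ |xᵢ⟩⟨xᵢ|` and `σ = ∑ μⱼ |yⱼ⟩⟨yⱼ|`. The `n`-fold tensor powers are diagonal in
the product bases with product eigenvalues, and their Nussbaum–Szkoła distributions are `P^{⊗n}`
and `Q^{⊗n}`, so it suffices to prove the one-shot bound
`β_ε(ρ, σ) ≥ s γ (P(A) - ε / (1 - s))` for any set `A` of pairs `(i, j)` on which
`γ P(i, j) ≤ Q(i, j)`; the likelihood condition `L_n ≤ R` gives this with `γ = e^{-R}`.

Fix a test `0 ≤ T ≤ 1` and let `p = |⟨xᵢ, T yⱼ⟩|`, `q = |⟨xᵢ, (1 - T) yⱼ⟩|`, `r = |⟨xᵢ, yⱼ⟩|`.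
Then `r ≤ p + q`, and `s (1 - s) (p + q)² ≤ (1 - s) q² + s p²` since the difference is
`((1 - s) q - s p)²`. On `A` we have `γ λᵢ ≤ μⱼ` wherever `r ≠ 0`, hence
`s γ λᵢ r² ≤ μⱼ q² + s γ / (1 - s) · λᵢ p²`. Extending the sum over `A` to all pairs, the Parseval bound
`∑ⱼ |⟨yⱼ, T u⟩|² = ‖T u‖² ≤ ⟨u, T u⟩` (as `T² ≤ T`) turns the right-hand side into
`Tr[(1 - T) σ] + s γ / (1 - s) · Tr[T ρ]`.
-/

open Matrix BigOperators ComplexOrder Finset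

noncomputable section

/-- The optimal quantum type-II error trade-off. -/
def qBeta {ι : Type*} [Fintype ι] [DecidableEq ι] (α : ℝ) (ρ σ : Matrix ι ι ℂ) : ℝ :=
  sInf { b : ℝ | ∃ T : Matrix ι ι ℂ,
    T.PosSemidef ∧ (1 - T).PosSemidef ∧ ((T * ρ).trace.re ≤ α) ∧
    b = 1 - (T * σ).trace.re }

/-- The `n`-fold tensor (Kronecker) power of a `d × d` matrix. -/
def tensorPow {d : ℕ} (ρ : Matrix (Fin d) (Fin d) ℂ) (n : ℕ) :
    Matrix (Fin n → Fin d) (Fin n → Fin d) ℂ :=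
  fun i j => ∏ k, ρ (i k) (j k)

theorem mul_one_sub_mul_sq_le_of_le_add {s p q r : ℝ} (hs0 : 0 ≤ s) (hs1 : s ≤ 1)
    (hr : 0 ≤ r) (hrpq : r ≤ p + q) :
    s * (1 - s) * r ^ 2 ≤ (1 - s) * q ^ 2 + s * p ^ 2 := by
  have hs : 0 ≤ s * (1 - s) := mul_nonneg hs0 (by linarith)
  calc s * (1 - s) * r ^ 2 ≤ s * (1 - s) * (p + q) ^ 2 := by gcongr
    _ ≤ (1 - s) * q ^ 2 + s * p ^ 2 := by nlinarith [sq_nonneg ((1 - s) * q - s * p)]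

theorem mul_mul_sq_le_of_mul_sq_le {s γ Λ M p q r : ℝ} (hs0 : 0 < s) (hs1 : s < 1)
    (hγ : 0 ≤ γ) (hΛ : 0 ≤ Λ) (hM : 0 ≤ M) (hr : 0 ≤ r) (hrpq : r ≤ p + q)
    (hratio : γ * Λ * r ^ 2 ≤ M * r ^ 2) :
    s * γ * (Λ * r ^ 2) ≤ M * q ^ 2 + s * γ / (1 - s) * (Λ * p ^ 2) := by
  have h1s : 0 < 1 - s := by linarith
  have hK : 0 ≤ s * γ / (1 - s) * (Λ * p ^ 2) := by positivity
  rcases hr.eq_or_lt with rfl | hr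
  · simpa using add_nonneg (mul_nonneg hM (sq_nonneg q)) hK
  have hγΛ : γ * Λ ≤ M := le_of_mul_le_mul_right hratio (by positivity)
  have hsq := mul_one_sub_mul_sq_le_of_le_add hs0.le hs1.le hr.le hrpq
  calc s * γ * (Λ * r ^ 2) = γ * Λ / (1 - s) * (s * (1 - s) * r ^ 2) := by
        field_simp
    _ ≤ γ * Λ / (1 - s) * ((1 - s) * q ^ 2 + s * p ^ 2) := by gcongr
    _ = γ * Λ * q ^ 2 + s * γ / (1 - s) * (Λ * p ^ 2) := by field_simp
    _ ≤ M * q ^ 2 + s * γ / (1 - s) * (Λ * p ^ 2) := by gcongr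

theorem exp_neg_mul_prod_le_prod_of_sum_log_div_le {κ α : Type*} [Fintype κ] {P Q : α → ℝ}
    (hP : ∀ a, 0 ≤ P a) (hQ : ∀ a, 0 ≤ Q a) (hsupp : ∀ a, P a ≠ 0 → Q a ≠ 0)
    {ω : κ → α} {R : ℝ} (hω : ∑ k, Real.log (P (ω k) / Q (ω k)) ≤ R) :
    Real.exp (-R) * ∏ k, P (ω k) ≤ ∏ k, Q (ω k) := by
  have hQprod : 0 ≤ ∏ k, Q (ω k) := prod_nonneg fun k _ => hQ _
  by_cases hzero : ∃ k, P (ω k) = 0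
  · obtain ⟨k, hk⟩ := hzero
    rwa [prod_eq_zero (mem_univ k) hk, mul_zero]
  push Not at hzero
  have hPk (k : κ) : 0 < P (ω k) := (hP _).lt_of_ne' (hzero k)
  have hQk (k : κ) : 0 < Q (ω k) := (hQ _).lt_of_ne' (hsupp _ (hzero k))
  have hratio : (∏ k, P (ω k)) / ∏ k, Q (ω k) ≤ Real.exp R := by
    rw [← prod_div_distrib, ← Real.exp_log (prod_pos fun k _ => div_pos (hPk k) (hQk k)),
      Real.log_prod fun k _ => (div_pos (hPk k) (hQk k)).ne']
    exact Real.exp_le_exp.mpr hω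
  rw [div_le_iff₀ (prod_pos fun k _ => hQk k)] at hratio
  calc Real.exp (-R) * ∏ k, P (ω k) ≤ Real.exp (-R) * (Real.exp R * ∏ k, Q (ω k)) := by
        gcongr
    _ = ∏ k, Q (ω k) := by rw [← mul_assoc, ← Real.exp_add, neg_add_cancel, Real.exp_zero,
        one_mul]

section Spectral

variable {ι : Type*} [Fintype ι]

theorem sum_vecMulVec_star_eq_one [DecidableEq ι] {y : ι → ι → ℂ}
    (hy : ∀ i j, star (y i) ⬝ᵥ y j = if i = j then 1 else 0) :
    ∑ j, vecMulVec (y j) (star (y j)) = 1 := by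
  set U : Matrix ι ι ℂ := Matrix.of fun a j => y j a
  have hU : Uᴴ * U = 1 := by
    ext i j
    simpa [U, Matrix.mul_apply, dotProduct, Matrix.one_apply] using hy i j
  have hU' : U * Uᴴ = 1 := mul_eq_one_comm.mp hU
  ext v w
  simpa [U, Matrix.mul_apply, Matrix.sum_apply, vecMulVec_apply] using
    congrFun (congrFun hU' v) w

theorem star_dotProduct_vecMulVec_mulVec (a w : ι → ℂ) :
    star w ⬝ᵥ (vecMulVec a (star a) *ᵥ w) = (Complex.normSq (star a ⬝ᵥ w) : ℂ) := by
  rw [Complex.normSq_eq_conj_mul_self, vecMulVec_mulVec, dotProduct_smul, star_dotProduct]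
  simp

theorem star_dotProduct_spectralSum_mulVec [DecidableEq ι] {z : ι → ι → ℂ}
    (hz : ∀ i j, star (z i) ⬝ᵥ z j = if i = j then 1 else 0) (c : ι → ℝ) (i : ι) :
    star (z i) ⬝ᵥ ((∑ j, (c j : ℂ) • vecMulVec (z j) (star (z j))) *ᵥ z i) = c i := by
  simp [sum_mulVec, smul_mulVec, vecMulVec_mulVec, dotProduct_smul, hz,
    Finset.sum_ite_eq']

theorem nonneg_of_posSemidef_spectralSum [DecidableEq ι] {z : ι → ι → ℂ}
    (hz : ∀ i j, star (z i) ⬝ᵥ z j = if i = j then 1 else 0) {c : ι → ℝ}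
    (hc : (∑ j, (c j : ℂ) • vecMulVec (z j) (star (z j))).PosSemidef) (i : ι) : 0 ≤ c i := by
  have h := hc.dotProduct_mulVec_nonneg (z i)
  rwa [star_dotProduct_spectralSum_mulVec hz, Complex.zero_le_real] at h

theorem re_trace_mul_spectralSum (T : Matrix ι ι ℂ) (c : ι → ℝ) (z : ι → ι → ℂ) :
    (T * ∑ i, (c i : ℂ) • vecMulVec (z i) (star (z i))).trace.re
      = ∑ i, c i * (star (z i) ⬝ᵥ (T *ᵥ z i)).re := by
  simp only [Finset.mul_sum, trace_sum, Matrix.mul_smul, trace_smul, Complex.re_sum,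
    smul_eq_mul, Complex.re_ofReal_mul, mul_vecMulVec, trace_vecMulVec, dotProduct_comm]

theorem Matrix.IsHermitian.normSq_star_dotProduct_mulVec_comm {M : Matrix ι ι ℂ}
    (hM : M.IsHermitian) (u v : ι → ℂ) :
    Complex.normSq (star u ⬝ᵥ (M *ᵥ v)) = Complex.normSq (star v ⬝ᵥ (M *ᵥ u)) := by
  rw [star_dotProduct, star_mulVec, ← dotProduct_mulVec, hM.eq, Complex.star_def,
    Complex.normSq_conj]

end Spectral

section Tests

variable {ι : Type*} [Fintype ι] [DecidableEq ι]

theorem Matrix.PosSemidef.sub_mul_self {T : Matrix ι ι ℂ} (hT : T.PosSemidef)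
    (hT1 : (1 - T).PosSemidef) : (T - T * T).PosSemidef := by
  open scoped MatrixOrder in
  obtain ⟨S, hS, hSS⟩ : ∃ S : Matrix ι ι ℂ, Sᴴ = S ∧ S * S = T :=
    ⟨CFC.sqrt T, (CFC.sqrt_nonneg T).isSelfAdjoint, CFC.sqrt_mul_sqrt_self T hT.nonneg⟩
  have h := hT1.mul_mul_conjTranspose_same S
  have hSTS : S * (T * S) = T * T := by rw [← hSS]; simp only [mul_assoc]
  rwa [hS, Matrix.mul_sub, Matrix.mul_one, Matrix.sub_mul, hSS, mul_assoc, hSTS] at h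

theorem re_star_dotProduct_mul_self_mulVec_le {T : Matrix ι ι ℂ} (hT : T.PosSemidef)
    (hT1 : (1 - T).PosSemidef) (u : ι → ℂ) :
    (star u ⬝ᵥ ((T * T) *ᵥ u)).re ≤ (star u ⬝ᵥ (T *ᵥ u)).re := by
  have h := (hT.sub_mul_self hT1).dotProduct_mulVec_nonneg u
  rw [sub_mulVec, dotProduct_sub, sub_nonneg] at h
  exact (Complex.le_def.mp h).1

theorem sum_normSq_star_dotProduct_mulVec_le {T : Matrix ι ι ℂ} (hT : T.PosSemidef)
    (hT1 : (1 - T).PosSemidef) {E : ι → ι → ℂ}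
    (hE : ∑ j, vecMulVec (E j) (star (E j)) = 1) (u : ι → ℂ) :
    ∑ j, Complex.normSq (star (E j) ⬝ᵥ (T *ᵥ u)) ≤ (star u ⬝ᵥ (T *ᵥ u)).re := by
  have hnorm : star (T *ᵥ u) ⬝ᵥ (T *ᵥ u) = star u ⬝ᵥ ((T * T) *ᵥ u) := by
    rw [star_mulVec, ← dotProduct_mulVec, hT.isHermitian.eq, mulVec_mulVec]
  have hparseval : star (T *ᵥ u) ⬝ᵥ (T *ᵥ u)
      = ∑ j, (Complex.normSq (star (E j) ⬝ᵥ (T *ᵥ u)) : ℂ) := by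
    calc star (T *ᵥ u) ⬝ᵥ (T *ᵥ u)
        = star (T *ᵥ u) ⬝ᵥ ((∑ j, vecMulVec (E j) (star (E j))) *ᵥ (T *ᵥ u)) := by
          rw [hE, one_mulVec]
      _ = _ := by
          rw [sum_mulVec, dotProduct_sum]
          exact Finset.sum_congr rfl fun j _ => star_dotProduct_vecMulVec_mulVec _ _
  calc ∑ j, Complex.normSq (star (E j) ⬝ᵥ (T *ᵥ u))
      = (star (T *ᵥ u) ⬝ᵥ (T *ᵥ u)).re := by simp [hparseval]
    _ ≤ (star u ⬝ᵥ (T *ᵥ u)).re := hnorm ▸ re_star_dotProduct_mul_self_mulVec_le hT hT1 u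

theorem norm_star_dotProduct_le_add (T : Matrix ι ι ℂ) (u v : ι → ℂ) :
    ‖star u ⬝ᵥ v‖ ≤ ‖star u ⬝ᵥ (T *ᵥ v)‖ + ‖star u ⬝ᵥ ((1 - T) *ᵥ v)‖ := by
  calc ‖star u ⬝ᵥ v‖ = ‖star u ⬝ᵥ (T *ᵥ v) + star u ⬝ᵥ ((1 - T) *ᵥ v)‖ := by
        rw [← dotProduct_add, ← add_mulVec, add_sub_cancel, one_mulVec]
    _ ≤ _ := norm_add_le _ _

theorem sum_mul_sum_normSq_le_re_trace_mul {T : Matrix ι ι ℂ} (hT : T.PosSemidef)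
    (hT1 : (1 - T).PosSemidef) {E : ι → ι → ℂ} (hE : ∑ j, vecMulVec (E j) (star (E j)) = 1)
    {c : ι → ℝ} (hc : ∀ i, 0 ≤ c i) (F : ι → ι → ℂ) :
    ∑ i, c i * ∑ j, Complex.normSq (star (E j) ⬝ᵥ (T *ᵥ F i))
      ≤ (T * ∑ i, (c i : ℂ) • vecMulVec (F i) (star (F i))).trace.re := by
  rw [re_trace_mul_spectralSum]
  gcongr with i
  exacts [hc i, sum_normSq_star_dotProduct_mulVec_le hT hT1 hE (F i)]

theorem mul_sum_le_re_trace_add {T : Matrix ι ι ℂ} {X Y : ι → ι → ℂ}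
    (hX : ∑ i, vecMulVec (X i) (star (X i)) = 1) (hY : ∑ j, vecMulVec (Y j) (star (Y j)) = 1)
    {Λ M : ι → ℝ} (hΛ : ∀ i, 0 ≤ Λ i) (hM : ∀ j, 0 ≤ M j) {ρ σ : Matrix ι ι ℂ}
    (hρ : ρ = ∑ i, (Λ i : ℂ) • vecMulVec (X i) (star (X i)))
    (hσ : σ = ∑ j, (M j : ℂ) • vecMulVec (Y j) (star (Y j)))
    (hT : T.PosSemidef) (hT1 : (1 - T).PosSemidef) {s γ : ℝ} (hs0 : 0 < s) (hs1 : s < 1)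
    (hγ : 0 ≤ γ) (A : Finset (ι × ι))
    (hA : ∀ p ∈ A, γ * Λ p.1 * Complex.normSq (star (X p.1) ⬝ᵥ Y p.2)
      ≤ M p.2 * Complex.normSq (star (X p.1) ⬝ᵥ Y p.2)) :
    s * γ * ∑ p ∈ A, Λ p.1 * Complex.normSq (star (X p.1) ⬝ᵥ Y p.2)
      ≤ ((1 - T) * σ).trace.re + s * γ / (1 - s) * (T * ρ).trace.re := by
  have hT1' : (1 - (1 - T)).PosSemidef := by rwa [sub_sub_cancel]
  have hpair (p : ι × ι) (hp : p ∈ A) : s * γ * (Λ p.1 * Complex.normSq (star (X p.1) ⬝ᵥ Y p.2))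
      ≤ M p.2 * Complex.normSq (star (X p.1) ⬝ᵥ ((1 - T) *ᵥ Y p.2))
        + s * γ / (1 - s) * (Λ p.1 * Complex.normSq (star (Y p.2) ⬝ᵥ (T *ᵥ X p.1))) := by
    rw [← hT.isHermitian.normSq_star_dotProduct_mulVec_comm]
    simp only [Complex.normSq_eq_norm_sq] at hA ⊢
    exact mul_mul_sq_le_of_mul_sq_le hs0 hs1 hγ (hΛ _) (hM _) (norm_nonneg _)
      (norm_star_dotProduct_le_add T _ _) (hA p hp)
  have htype2 := sum_mul_sum_normSq_le_re_trace_mul hT1 hT1' hX hM Y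
  have htype1 := sum_mul_sum_normSq_le_re_trace_mul hT hT1 hY hΛ X
  rw [← hσ] at htype2
  rw [← hρ] at htype1
  simp only [mul_sum, ← Fintype.sum_prod_type_right'] at htype2
  simp only [mul_sum, ← Fintype.sum_prod_type'] at htype1
  rw [mul_sum]
  refine (sum_le_sum hpair).trans ?_
  rw [sum_add_distrib, ← mul_sum]
  gcongr
  · refine (sum_le_sum_of_subset_of_nonneg (subset_univ A) fun p _ _ => ?_).trans htype2
    exact mul_nonneg (hM _) (Complex.normSq_nonneg _)
  · refine (sum_le_sum_of_subset_of_nonneg (subset_univ A) fun p _ _ => ?_).trans htype1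
    exact mul_nonneg (hΛ _) (Complex.normSq_nonneg _)

end Tests

section Tensor

variable {κ ι : Type*} [Fintype κ]

def tensorProdVec (u : κ → ι → ℂ) : (κ → ι) → ℂ := fun v => ∏ k, u k (v k)

theorem star_tensorProdVec_dotProduct [DecidableEq κ] [Fintype ι] (u w : κ → ι → ℂ) :
    star (tensorProdVec u) ⬝ᵥ tensorProdVec w = ∏ k, star (u k) ⬝ᵥ w k := by
  simp only [dotProduct, tensorProdVec, Pi.star_apply, star_prod, ← prod_mul_distrib]
  exact (Fintype.prod_sum fun k a => star (u k a) * w k a).symm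

theorem star_tensorProdVec_dotProduct_of_orthonormal [DecidableEq κ] [Fintype ι]
    [DecidableEq ι] {z : ι → ι → ℂ} (hz : ∀ i j, star (z i) ⬝ᵥ z j = if i = j then 1 else 0)
    (i j : κ → ι) :
    star (tensorProdVec fun k => z (i k)) ⬝ᵥ (tensorProdVec fun k => z (j k))
      = if i = j then 1 else 0 := by
  rw [star_tensorProdVec_dotProduct]
  split_ifs with hij
  · simp [hij, hz]
  · obtain ⟨k, hk⟩ := Function.ne_iff.mp hij
    exact prod_eq_zero (mem_univ k) (by simp [hz, hk])

variable {d : ℕ}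

theorem tensorPow_spectralSum (c : Fin d → ℝ) (z : Fin d → Fin d → ℂ) (n : ℕ) :
    tensorPow (∑ i, (c i : ℂ) • vecMulVec (z i) (star (z i))) n
      = ∑ i : Fin n → Fin d, ((∏ k, c (i k) : ℝ) : ℂ) •
          vecMulVec (tensorProdVec fun k => z (i k)) (star (tensorProdVec fun k => z (i k))) := by
  ext v w
  simp only [tensorPow, tensorProdVec, Matrix.sum_apply, Matrix.smul_apply, vecMulVec_apply,
    Pi.star_apply, smul_eq_mul, Complex.ofReal_prod, star_prod, ← prod_mul_distrib]
  exact Fintype.prod_sum fun k i => (c i : ℂ) * (z i (v k) * star (z i (w k)))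

theorem trace_tensorPow (ρ : Matrix (Fin d) (Fin d) ℂ) (n : ℕ) :
    (tensorPow ρ n).trace = ρ.trace ^ n := by
  simp only [trace, Matrix.diag, tensorPow]
  rw [← Fintype.prod_sum fun (_ : Fin n) t => ρ t t, prod_const, card_univ, Fintype.card_fin]

end Tensor

theorem prod_mul_normSq_star_dotProduct {κ ι : Type*} [Fintype κ] [DecidableEq κ] [Fintype ι]
    (a : κ → ℝ) (x y : ι → ι → ℂ) (i j : κ → ι) :
    ∏ k, a k * Complex.normSq (star (x (i k)) ⬝ᵥ y (j k))
      = (∏ k, a k) * Complex.normSq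
          (star (tensorProdVec fun k => x (i k)) ⬝ᵥ tensorProdVec fun k => y (j k)) := by
  rw [star_tensorProdVec_dotProduct, map_prod, prod_mul_distrib]

theorem exp_neg_mul_prod_mul_normSq_le_of_sum_log_div_le {κ ι : Type*} [Fintype κ]
    [DecidableEq κ] [Fintype ι] {lam mu : ι → ℝ} (hlam : ∀ i, 0 ≤ lam i) (hmu : ∀ j, 0 ≤ mu j)
    {x y : ι → ι → ℂ} {P Q : ι × ι → ℝ}
    (hP : ∀ p, P p = lam p.1 * Complex.normSq (star (x p.1) ⬝ᵥ y p.2))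
    (hQ : ∀ p, Q p = mu p.2 * Complex.normSq (star (x p.1) ⬝ᵥ y p.2))
    (hsupp : ∀ p, P p ≠ 0 → Q p ≠ 0) {ω : κ → ι × ι} {R : ℝ}
    (hω : ∑ k, Real.log (P (ω k) / Q (ω k)) ≤ R) :
    Real.exp (-R) * (∏ k, lam (ω k).1) * Complex.normSq
        (star (tensorProdVec fun k => x (ω k).1) ⬝ᵥ tensorProdVec fun k => y (ω k).2)
      ≤ (∏ k, mu (ω k).2) * Complex.normSq
        (star (tensorProdVec fun k => x (ω k).1) ⬝ᵥ tensorProdVec fun k => y (ω k).2) := by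
  have hPnn (p : ι × ι) : 0 ≤ P p := hP p ▸ mul_nonneg (hlam _) (Complex.normSq_nonneg _)
  have hQnn (p : ι × ι) : 0 ≤ Q p := hQ p ▸ mul_nonneg (hmu _) (Complex.normSq_nonneg _)
  have hlik := exp_neg_mul_prod_le_prod_of_sum_log_div_le hPnn hQnn hsupp hω
  simp only [hP, hQ] at hlik
  rwa [prod_mul_normSq_star_dotProduct, prod_mul_normSq_star_dotProduct, ← mul_assoc] at hlik

section Beta

variable {ι : Type*} [Fintype ι] [DecidableEq ι]

theorem le_qBeta {α δ : ℝ} {ρ σ : Matrix ι ι ℂ} (hα : 0 ≤ α)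
    (h : ∀ T : Matrix ι ι ℂ, T.PosSemidef → (1 - T).PosSemidef → (T * ρ).trace.re ≤ α →
      δ ≤ 1 - (T * σ).trace.re) :
    δ ≤ qBeta α ρ σ := by
  refine le_csInf ⟨1, 0, .zero, by simpa using PosSemidef.one, by simpa using hα, by simp⟩ ?_
  rintro b ⟨T, hT, hT1, hTρ, rfl⟩
  exact h T hT hT1 hTρ

theorem mul_sub_le_qBeta {X Y : ι → ι → ℂ}
    (hX : ∑ i, vecMulVec (X i) (star (X i)) = 1) (hY : ∑ j, vecMulVec (Y j) (star (Y j)) = 1)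
    {Λ M : ι → ℝ} (hΛ : ∀ i, 0 ≤ Λ i) (hM : ∀ j, 0 ≤ M j) {ρ σ : Matrix ι ι ℂ}
    (hρ : ρ = ∑ i, (Λ i : ℂ) • vecMulVec (X i) (star (X i)))
    (hσ : σ = ∑ j, (M j : ℂ) • vecMulVec (Y j) (star (Y j))) (hσtr : σ.trace = 1)
    {s γ ε : ℝ} (hs0 : 0 < s) (hs1 : s < 1) (hγ : 0 ≤ γ) (hε : 0 ≤ ε) (A : Finset (ι × ι))
    (hA : ∀ p ∈ A, γ * Λ p.1 * Complex.normSq (star (X p.1) ⬝ᵥ Y p.2)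
      ≤ M p.2 * Complex.normSq (star (X p.1) ⬝ᵥ Y p.2)) :
    s * γ * (∑ p ∈ A, Λ p.1 * Complex.normSq (star (X p.1) ⬝ᵥ Y p.2) - ε / (1 - s))
      ≤ qBeta ε ρ σ := by
  refine le_qBeta hε fun T hT hT1 hTρ => ?_
  have hbound := mul_sum_le_re_trace_add hX hY hΛ hM hρ hσ hT hT1 hs0 hs1 hγ A hA
  have htype2 : ((1 - T) * σ).trace.re = 1 - (T * σ).trace.re := by
    rw [Matrix.sub_mul, Matrix.one_mul, trace_sub, Complex.sub_re, hσtr, Complex.one_re]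
  have htype1 : s * γ / (1 - s) * (T * ρ).trace.re ≤ s * γ / (1 - s) * ε := by
    have : 0 < 1 - s := by linarith
    gcongr
  calc _ = s * γ * ∑ p ∈ A, Λ p.1 * Complex.normSq (star (X p.1) ⬝ᵥ Y p.2)
        - s * γ / (1 - s) * ε := by ring
    _ ≤ 1 - (T * σ).trace.re := by linarith

end Beta

theorem info_spectrum_upper_bound_general {d : ℕ} (ρ σ : Matrix (Fin d) (Fin d) ℂ)
    (hρ : ρ.PosSemidef)
    (hσ : σ.PosSemidef) (hσtr : σ.trace = 1)
    (lam mu : Fin d → ℝ) (x y : Fin d → (Fin d → ℂ))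
    (hx : ∀ i j, star (x i) ⬝ᵥ x j = if i = j then 1 else 0)
    (hy : ∀ i j, star (y i) ⬝ᵥ y j = if i = j then 1 else 0)
    (hρdec : ρ = ∑ i, (lam i : ℂ) • vecMulVec (x i) (star (x i)))
    (hσdec : σ = ∑ j, (mu j : ℂ) • vecMulVec (y j) (star (y j)))
    (P Q : Fin d × Fin d → ℝ)
    (hP : ∀ p, P p = lam p.1 * Complex.normSq (star (x p.1) ⬝ᵥ y p.2))
    (hQ : ∀ p, Q p = mu p.2 * Complex.normSq (star (x p.1) ⬝ᵥ y p.2))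
    (hsupp : ∀ p, P p ≠ 0 → Q p ≠ 0)
    (n : ℕ) (s R ε : ℝ) (hs0 : 0 < s) (hs1 : s < 1)
    (hε0 : 0 ≤ ε)
    (hprob : ε / (1 - s) <
      ∑ ω : Fin n → Fin d × Fin d with
        (∑ k, Real.log (P (ω k) / Q (ω k))) ≤ R, ∏ k, P (ω k)) :
    -Real.log (qBeta ε (tensorPow ρ n) (tensorPow σ n)) ≤
      R - Real.log ((∑ ω : Fin n → Fin d × Fin d with
            (∑ k, Real.log (P (ω k) / Q (ω k))) ≤ R, ∏ k, P (ω k))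
          - ε / (1 - s))
        - Real.log s := by
  have hlam := nonneg_of_posSemidef_spectralSum hx (hρdec ▸ hρ)
  have hmu := nonneg_of_posSemidef_spectralSum hy (hσdec ▸ hσ)
  set L : Finset (Fin n → Fin d × Fin d) :=
    univ.filter fun ω => ∑ k, Real.log (P (ω k) / Q (ω k)) ≤ R
  set e := Equiv.arrowProdEquivProdArrow (Fin n) (fun _ => Fin d) (fun _ => Fin d)
  have hβ := mul_sub_le_qBeta
    (sum_vecMulVec_star_eq_one (star_tensorProdVec_dotProduct_of_orthonormal hx))
    (sum_vecMulVec_star_eq_one (star_tensorProdVec_dotProduct_of_orthonormal hy))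
    (fun i => prod_nonneg fun k _ => hlam (i k)) (fun j => prod_nonneg fun k _ => hmu (j k))
    (hρdec ▸ tensorPow_spectralSum lam x n) (hσdec ▸ tensorPow_spectralSum mu y n)
    (by rw [trace_tensorPow, hσtr, one_pow]) hs0 hs1 (Real.exp_pos (-R)).le hε0
    (L.map e.toEmbedding) fun p hp => by
      obtain ⟨ω, hω, rfl⟩ := mem_map.mp hp
      exact exp_neg_mul_prod_mul_normSq_le_of_sum_log_div_le hlam hmu hP hQ hsupp
        (mem_filter.mp hω).2
  have hPprod (ω : Fin n → Fin d × Fin d) := prod_mul_normSq_star_dotProduct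
    (fun k => lam (ω k).1) x y (fun k => (ω k).1) (fun k => (ω k).2)
  simp only [← hP] at hPprod
  simp only [sum_map, Equiv.coe_toEmbedding, e, Equiv.arrowProdEquivProdArrow, Equiv.coe_fn_mk,
    ← hPprod] at hβ
  have hW := sub_pos.mpr hprob
  have hlog := Real.log_le_log (by positivity) hβ
  rw [Real.log_mul (by positivity) hW.ne', Real.log_mul hs0.ne' (Real.exp_pos _).ne',
    Real.log_exp] at hlog
  linarith

/-- Inequality (42): information-spectrum-type upper bound on the quantum
hypothesis testing relative entropy in terms of the log-likelihood ratio of the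
Nussbaum–Szkoła distributions. -/
theorem info_spectrum_upper_bound {d : ℕ} (ρ σ : Matrix (Fin d) (Fin d) ℂ)
    (hρ : ρ.PosSemidef) (hρtr : ρ.trace = 1)
    (hσ : σ.PosSemidef) (hσtr : σ.trace = 1)
    (lam mu : Fin d → ℝ) (x y : Fin d → (Fin d → ℂ))
    (hx : ∀ i j, star (x i) ⬝ᵥ x j = if i = j then 1 else 0)
    (hy : ∀ i j, star (y i) ⬝ᵥ y j = if i = j then 1 else 0)
    (hρdec : ρ = ∑ i, (lam i : ℂ) • vecMulVec (x i) (star (x i)))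
    (hσdec : σ = ∑ j, (mu j : ℂ) • vecMulVec (y j) (star (y j)))
    (P Q : Fin d × Fin d → ℝ)
    (hP : ∀ p, P p = lam p.1 * Complex.normSq (star (x p.1) ⬝ᵥ y p.2))
    (hQ : ∀ p, Q p = mu p.2 * Complex.normSq (star (x p.1) ⬝ᵥ y p.2))
    (hsupp : ∀ p, P p ≠ 0 → Q p ≠ 0)
    (n : ℕ) (hn : 1 ≤ n) (s R ε : ℝ) (hs0 : 0 < s) (hs1 : s < 1)
    (hε0 : 0 ≤ ε) (hε1 : ε ≤ 1 - s)
    (hprob : ε / (1 - s) <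
      ∑ ω : Fin n → Fin d × Fin d with
        (∑ k, Real.log (P (ω k) / Q (ω k))) ≤ R, ∏ k, P (ω k)) :
    -Real.log (qBeta ε (tensorPow ρ n) (tensorPow σ n)) ≤
      R - Real.log ((∑ ω : Fin n → Fin d × Fin d with
            (∑ k, Real.log (P (ω k) / Q (ω k))) ≤ R, ∏ k, P (ω k))
          - ε / (1 - s))
        - Real.log s :=
  info_spectrum_upper_bound_general ρ σ hρ hσ hσtr lam mu x y hx hy hρdec hσdec P Q hP hQ hsupp n s
    R ε hs0 hs1 hε0 hprob
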